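/- arXiv:2210.05054 — 2 statements merged into one kernel-verified Lean document; each statement's English description precedes it below -/
import Mathlib

section
/- Suppose π : X → Y and π' : X' → Y' are factor maps of G-systems and there is a commutative diagram in which φ̄ : X → X' is an isomorphism of measure-preserving G-systems, φ : Y → Y' is a factor map, and π' ∘ φ̄ = φ ∘ π (i.e. π' is a downward extension of π). Then for every rate function U and every Følner sequence (F_n) for G, h_slow^{U,(F_n)}(X | π) ≤ h_slow^{U,(F_n)}(X' | π'). -/
open MeasureTheory Filter Set Topology
open scoped ENNReal Classical

section SlowEntropyDefs

variable {G : Type*} [Group G]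

/-- A measure-preserving action of a group `G` on a probability space. -/
structure IsMPSystem {X : Type*} [MeasurableSpace X] (T : G → X → X) (μ : Measure X) : Prop where
  prob : IsProbabilityMeasure μ
  meas : ∀ g, Measurable (T g)
  mp : ∀ g, MeasurePreserving (T g) μ μ
  mul : ∀ g g' x, T (g * g') x = T g (T g' x)
  one : ∀ x, T 1 x = x

/-- A factor map between measure-preserving `G`-systems. -/
structure IsFactorMap {X Y : Type*} [MeasurableSpace X] [MeasurableSpace Y]
    (T : G → X → X) (μ : Measure X) (S : G → Y → Y) (ν : Measure Y) (π : X → Y) : Prop where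
  meas : Measurable π
  map : μ.map π = ν
  equiv : ∀ g x, π (T g x) = S g (π x)

/-- An isomorphism of measure-preserving `G`-systems: a factor map with an a.e. two-sided
inverse factor map. -/
def IsIsomorphism {X Y : Type*} [MeasurableSpace X] [MeasurableSpace Y]
    (T : G → X → X) (μ : Measure X) (S : G → Y → Y) (ν : Measure Y) (π : X → Y) : Prop :=
  IsFactorMap T μ S ν π ∧ ∃ ρ : Y → X, IsFactorMap S ν T μ ρ ∧
    (∀ᵐ x ∂μ, ρ (π x) = x) ∧ (∀ᵐ y ∂ν, π (ρ y) = y)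

/-- `μy` is a disintegration of `μ` over the map `π : X → Y` (with `ν` the image of `μ`). -/
structure IsDisintegration {X Y : Type*} [MeasurableSpace X] [MeasurableSpace Y]
    (μ : Measure X) (ν : Measure Y) (π : X → Y) (μy : Y → Measure X) : Prop where
  prob : ∀ y, IsProbabilityMeasure (μy y)
  meas : ∀ s : Set X, MeasurableSet s → Measurable fun y => μy y s
  eq : ∀ s : Set X, MeasurableSet s → μ s = ∫⁻ y, μy y s ∂ν
  supp : ∀ᵐ y ∂ν, μy y (π ⁻¹' {y}) = 1

/-- A (left) Følner sequence for `G`: a sequence of nonempty finite subsets `F n ⊆ G` with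
`|gFₙ ∩ Fₙ| / |Fₙ| → 1` for every `g ∈ G`. -/
def IsFolner (F : ℕ → Finset G) : Prop :=
  (∀ n, (F n).Nonempty) ∧ ∀ g : G,
    Tendsto (fun n => ((((F n).image fun h => g * h) ∩ F n).card : ℝ) / ((F n).card : ℝ))
      atTop (nhds 1)

/-- The normalized Hamming distance `d_{P,F}` between the `(P,F)`-names of two points. -/
noncomputable def hamDist {X : Type*} (T : G → X → X) {r : ℕ} (P : X → Fin r)
    (F : Finset G) (x x' : X) : ℝ :=
  ((F.filter fun f => P (T f x) ≠ P (T f x')).card : ℝ) / (F.card : ℝ)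

/-- The set `E` has `d_{P,F}`-diameter at most `ε`. -/
def diamLE {X : Type*} (T : G → X → X) {r : ℕ} (P : X → Fin r) (F : Finset G)
    (E : Set X) (ε : ℝ) : Prop :=
  ∀ x ∈ E, ∀ x' ∈ E, hamDist T P F x x' ≤ ε

/-- The Hamming `ε`-covering number `cov(λ, P, F, ε)`: the smallest `M` such that there are
sets `E₁, …, E_M` of `d_{P,F}`-diameter at most `ε` whose union has `λ`-measure `≥ 1 - ε`. -/
noncomputable def hamCov {X : Type*} [MeasurableSpace X] (T : G → X → X) (lam : Measure X)
    {r : ℕ} (P : X → Fin r) (F : Finset G) (ε : ℝ) : ℕ :=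
  sInf {M : ℕ | ∃ E : Fin M → Set X, (∀ i, diamLE T P F (E i) ε) ∧
    ENNReal.ofReal (1 - ε) ≤ lam (⋃ i, E i)}

/-- The relative Hamming `ε`-covering number `cov(μ, P, F, ε | π)`, defined through the
disintegration `μy` of `μ` over `π` and the image measure `ν`: the smallest `M` such that
there exists `S ⊆ Y` with `ν S ≥ 1 - ε` and `cov(μ_y, P, F, ε) ≤ M` for every `y ∈ S`. -/
noncomputable def hamCovRel {X Y : Type*} [MeasurableSpace X] [MeasurableSpace Y]
    (T : G → X → X) (μy : Y → Measure X) (ν : Measure Y) {r : ℕ} (P : X → Fin r)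
    (F : Finset G) (ε : ℝ) : ℕ :=
  sInf {M : ℕ | ∃ S : Set Y, MeasurableSet S ∧ ENNReal.ofReal (1 - ε) ≤ ν S ∧
    ∀ y ∈ S, hamCov T (μy y) P F ε ≤ M}

/-- A rate function: an increasing positive function on `ℕ` tending to infinity. -/
def IsRateFunction (U : ℕ → ℝ) : Prop :=
  (∀ n, 0 < U n) ∧ Monotone U ∧ Tendsto U atTop atTop

/-- Relative slow entropy of a partition:
`sup_{ε>0} limsup_n cov(μ, P, F_n, ε | π) / U(|F_n|)`, valued in `[0,∞]`. -/
noncomputable def slowEntropyPartRel {X Y : Type*} [MeasurableSpace X] [MeasurableSpace Y]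
    (T : G → X → X) (μy : Y → Measure X) (ν : Measure Y) {r : ℕ} (P : X → Fin r)
    (U : ℕ → ℝ) (F : ℕ → Finset G) : ℝ≥0∞ :=
  ⨆ ε ∈ Ioi (0 : ℝ),
    Filter.limsup
      (fun n => ENNReal.ofReal ((hamCovRel T μy ν P (F n) ε : ℝ) / U (F n).card)) atTop

/-- Relative slow entropy: the supremum over all finite measurable partitions. -/
noncomputable def slowEntropyRel {X Y : Type*} [MeasurableSpace X] [MeasurableSpace Y]
    (T : G → X → X) (μy : Y → Measure X) (ν : Measure Y)
    (U : ℕ → ℝ) (F : ℕ → Finset G) : ℝ≥0∞ :=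
  ⨆ (r : ℕ) (P : X → Fin r) (_ : Measurable P), slowEntropyPartRel T μy ν P U F

/-- The partition distance `dist_λ(P, Q) = λ{x : P(x) ≠ Q(x)}` between two labeled
partitions indexed by the same set. -/
noncomputable def partDist {Z : Type*} [MeasurableSpace Z] (lam : Measure Z)
    {ι : Type*} (P Q : Z → ι) : ℝ≥0∞ :=
  lam {z | P z ≠ Q z}

/-- Ergodicity of a measure-preserving `G`-action. -/
def IsErgodicAction {X : Type*} [MeasurableSpace X] (T : G → X → X) (μ : Measure X) : Prop :=
  ∀ s : Set X, MeasurableSet s → (∀ g, T g ⁻¹' s = s) → μ s = 0 ∨ μ s = 1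

end SlowEntropyDefs

/-!
Let `ρ` be an a.e. inverse of `φ̄` and transport a partition `P` of `X` to `P ∘ ρ` on `X'`.
Off a null set the `(P, F)`-name of `x` and the `(P ∘ ρ, F)`-name of `φ̄ x` coincide, so
Hamming distances and covers correspond under `φ̄`. Since `π' ∘ φ̄ = φ ∘ π`, the fibre measure
`μ'_{y'}` is the average of the `φ̄`-images of the `μ_y` over `y ∈ φ⁻¹ y'`. Hence if `μ'_{y'}`
gives mass `≥ 1 - ε²/2` to a union of `M` sets of small diameter, Markov's inequality shows that
outside a set of relative measure `ε/2` the `μ_y` give mass `≥ 1 - ε` to its preimage. The covers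
can be taken to be unions of name cells, of which there are only finitely many, so choosing for
each `y'` the first one that works is measurable; summing the Markov bounds over the resulting
partition of `Y'` gives `cov(μ, P, F, ε | π) ≤ cov(μ', P ∘ ρ, F, ε²/2 | π')` for every `F`.
-/

section Markov

variable {Y Y' : Type*} [MeasurableSpace Y] [MeasurableSpace Y'] {ν : Measure Y}
  {ν' : Measure Y'} {δ η : ℝ≥0∞}

theorem mul_measure_diff_setOf_le [IsFiniteMeasure ν] {f : Y → ℝ≥0∞} (hf : Measurable f)
    (hf1 : ∀ y, f y ≤ 1) {D : Set Y} (h : (1 - δ) * ν D ≤ ∫⁻ y in D, f y ∂ν) :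
    η * ν (D \ {y | 1 - η ≤ f y}) ≤ δ * ν D := by
  have hmarkov : η * ν (D \ {y | 1 - η ≤ f y}) ≤ ∫⁻ y in D, (1 - f y) ∂ν :=
    calc η * ν (D \ {y | 1 - η ≤ f y}) = ∫⁻ _ in D \ {y | 1 - η ≤ f y}, η ∂ν :=
          (setLIntegral_const _ _).symm
      _ ≤ ∫⁻ y in D \ {y | 1 - η ≤ f y}, (1 - f y) ∂ν :=
          setLIntegral_mono (measurable_const.sub hf) fun y hy =>
            ENNReal.le_sub_of_add_le_left (ne_top_of_le_ne_top ENNReal.one_ne_top (hf1 y))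
              (lt_tsub_iff_right.mp (not_le.mp hy.2)).le
      _ ≤ ∫⁻ y in D, (1 - f y) ∂ν := lintegral_mono_set sdiff_subset
  have hsplit : ∫⁻ y in D, (1 - f y) ∂ν + ∫⁻ y in D, f y ∂ν = ν D := by
    rw [← lintegral_add_right _ hf]
    simp [tsub_add_cancel_of_le (hf1 _)]
  refine ENNReal.le_of_add_le_add_right (a := (1 - δ) * ν D)
    (ENNReal.mul_ne_top (by simp) (measure_ne_top _ _)) ?_
  calc η * ν (D \ {y | 1 - η ≤ f y}) + (1 - δ) * ν D
      ≤ ∫⁻ y in D, (1 - f y) ∂ν + ∫⁻ y in D, f y ∂ν := add_le_add hmarkov h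
    _ = 1 * ν D := by rw [hsplit, one_mul]
    _ ≤ (δ + (1 - δ)) * ν D := by gcongr; exact le_add_tsub
    _ = δ * ν D + (1 - δ) * ν D := add_mul _ _ _

variable [IsFiniteMeasure ν] {φ : Y → Y'}

theorem mul_measure_preimage_diff_le {f : Y → ℝ≥0∞} {g : Y' → ℝ≥0∞} (hφ : Measurable φ)
    (hφν : ν.map φ = ν') (hf : Measurable f) (hf1 : ∀ y, f y ≤ 1) {D : Set Y'}
    (hfg : ∫⁻ y in φ ⁻¹' D, f y ∂ν = ∫⁻ y' in D, g y' ∂ν') (hD : MeasurableSet D)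
    (hDg : D ⊆ {y' | 1 - δ ≤ g y'}) :
    η * ν (φ ⁻¹' D \ {y | 1 - η ≤ f y}) ≤ δ * ν' D := by
  have hν : ν (φ ⁻¹' D) = ν' D := by rw [← hφν, Measure.map_apply hφ hD]
  rw [← hν]
  refine mul_measure_diff_setOf_le hf hf1 ?_
  calc (1 - δ) * ν (φ ⁻¹' D) = ∫⁻ _ in D, (1 - δ) ∂ν' := by rw [setLIntegral_const, hν]
    _ ≤ ∫⁻ y' in D, g y' ∂ν' := setLIntegral_mono' hD fun y' hy' => hDg hy'
    _ = ∫⁻ y in φ ⁻¹' D, f y ∂ν := hfg.symm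

theorem mul_measure_preimage_iUnion_diff_le {f : ℕ → Y → ℝ≥0∞} {g : ℕ → Y' → ℝ≥0∞}
    (hφ : Measurable φ) (hφν : ν.map φ = ν') (hf : ∀ n, Measurable (f n))
    (hf1 : ∀ n y, f n y ≤ 1) (hg : ∀ n, Measurable (g n))
    (hfg : ∀ n D, MeasurableSet D → ∫⁻ y in φ ⁻¹' D, f n y ∂ν = ∫⁻ y' in D, g n y' ∂ν') :
    η * ν (φ ⁻¹' (⋃ n, {y' | 1 - δ ≤ g n y'}) \ ⋃ n, {y | 1 - η ≤ f n y}) ≤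
      δ * ν' (⋃ n, {y' | 1 - δ ≤ g n y'}) := by
  set S' := fun n => {y' | 1 - δ ≤ g n y'}
  set Q := fun n => {y | 1 - η ≤ f n y}
  have hD : ∀ n, MeasurableSet (disjointed S' n) :=
    MeasurableSet.disjointed fun n => hg n measurableSet_Ici
  have hsub : φ ⁻¹' (⋃ n, S' n) \ ⋃ n, Q n ⊆ ⋃ n, φ ⁻¹' disjointed S' n \ Q n := by
    rintro y ⟨hy, hyQ⟩
    rw [← iUnion_disjointed, preimage_iUnion, mem_iUnion] at hy
    obtain ⟨n, hn⟩ := hy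
    exact mem_iUnion.2 ⟨n, hn, fun h => hyQ (mem_iUnion.2 ⟨n, h⟩)⟩
  calc η * ν (φ ⁻¹' (⋃ n, S' n) \ ⋃ n, Q n)
      ≤ η * ∑' n, ν (φ ⁻¹' disjointed S' n \ Q n) := by
        gcongr
        exact (measure_mono hsub).trans (measure_iUnion_le _)
    _ = ∑' n, η * ν (φ ⁻¹' disjointed S' n \ Q n) := ENNReal.tsum_mul_left.symm
    _ ≤ ∑' n, δ * ν' (disjointed S' n) := ENNReal.tsum_le_tsum fun n =>
        mul_measure_preimage_diff_le hφ hφν (hf n) (hf1 n) (hfg n _ (hD n)) (hD n)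
          (disjointed_subset S' n)
    _ = δ * ν' (⋃ n, S' n) := by
        rw [ENNReal.tsum_mul_left, ← measure_iUnion (disjoint_disjointed S') hD,
          iUnion_disjointed]

theorem measure_iUnion_setOf_le_add [IsProbabilityMeasure ν'] {ι : Type*} [Countable ι]
    {f : ι → Y → ℝ≥0∞} {g : ι → Y' → ℝ≥0∞} (hφ : Measurable φ) (hφν : ν.map φ = ν')
    (hf : ∀ i, Measurable (f i)) (hf1 : ∀ i y, f i y ≤ 1) (hg : ∀ i, Measurable (g i))
    (hfg : ∀ i D, MeasurableSet D → ∫⁻ y in φ ⁻¹' D, f i y ∂ν = ∫⁻ y' in D, g i y' ∂ν')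
    (hη₀ : η ≠ 0) (hη : η ≠ ∞) :
    ν' (⋃ i, {y' | 1 - δ ≤ g i y'}) ≤ ν (⋃ i, {y | 1 - η ≤ f i y}) + δ / η := by
  cases isEmpty_or_nonempty ι
  · simp
  obtain ⟨e, he⟩ := exists_surjective_nat ι
  rw [← he.iUnion_comp, ← he.iUnion_comp]
  set S' := ⋃ n, {y' | 1 - δ ≤ g (e n) y'}
  set Q := ⋃ n, {y | 1 - η ≤ f (e n) y}
  have hbad : ν (φ ⁻¹' S' \ Q) ≤ δ / η := by
    rw [ENNReal.le_div_iff_mul_le (Or.inl hη₀) (Or.inl hη), mul_comm]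
    calc _ ≤ δ * ν' S' :=
          mul_measure_preimage_iUnion_diff_le hφ hφν (fun n => hf (e n)) (fun n => hf1 (e n))
            (fun n => hg (e n)) fun n => hfg (e n)
      _ ≤ δ := mul_le_of_le_one_right' prob_le_one
  have hS' : MeasurableSet S' := .iUnion fun n => hg (e n) measurableSet_Ici
  calc ν' S' = ν (φ ⁻¹' S') := by rw [← hφν, Measure.map_apply hφ hS']
    _ ≤ ν (φ ⁻¹' S' ∩ Q) + ν (φ ⁻¹' S' \ Q) := measure_le_inter_add_sdiff _ _ _
    _ ≤ ν Q + δ / η := add_le_add (measure_mono inter_subset_right) hbad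

end Markov

namespace IsDisintegration

variable {X Y : Type*} [MeasurableSpace X] [MeasurableSpace Y] {μ : Measure X} {ν : Measure Y}
  {π : X → Y} {μy : Y → Measure X}

theorem setLIntegral_eq [MeasurableSingletonClass Y] (hdis : IsDisintegration μ ν π μy)
    (hπ : Measurable π) {B : Set X} (hB : MeasurableSet B) {E : Set Y} (hE : MeasurableSet E) :
    ∫⁻ y in E, μy y B ∂ν = μ (B ∩ π ⁻¹' E) := by
  rw [hdis.eq _ (hB.inter (hπ hE)), ← lintegral_indicator hE]
  refine lintegral_congr_ae ?_
  filter_upwards [hdis.supp] with y hy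
  have := hdis.prob y
  have hfiber : μy y (π ⁻¹' {y})ᶜ = 0 := by
    rw [measure_compl (hπ (measurableSet_singleton y)) (measure_ne_top _ _), hy, measure_univ,
      tsub_self]
  by_cases hyE : y ∈ E
  · rw [indicator_of_mem hyE, measure_inter_conull (measure_mono_null
      (compl_subset_compl.2 (preimage_mono (singleton_subset_iff.2 hyE))) hfiber)]
  · rw [indicator_of_notMem hyE]
    exact (measure_mono_null (inter_subset_right.trans fun x hx (hxy : π x = y) =>
      hyE (hxy ▸ hx)) hfiber).symm

theorem setLIntegral_preimage_eq {X' Y' : Type*} [MeasurableSpace X'] [MeasurableSpace Y']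
    [MeasurableSingletonClass Y] [MeasurableSingletonClass Y'] {μ' : Measure X'}
    {ν' : Measure Y'} {π' : X' → Y'} {μy' : Y' → Measure X'}
    (hdis : IsDisintegration μ ν π μy) (hdis' : IsDisintegration μ' ν' π' μy')
    (hπ : Measurable π) (hπ' : Measurable π') {φbar : X → X'} {φ : Y → Y'}
    (hφbar : Measurable φbar) (hφbarμ : μ.map φbar = μ') (hφ : Measurable φ)
    (hcomm : ∀ x, π' (φbar x) = φ (π x)) {A : Set X'} (hA : MeasurableSet A) {D : Set Y'}
    (hD : MeasurableSet D) :
    ∫⁻ y in φ ⁻¹' D, μy y (φbar ⁻¹' A) ∂ν = ∫⁻ y' in D, μy' y' A ∂ν' := by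
  rw [hdis.setLIntegral_eq hπ (hφbar hA) (hφ hD), hdis'.setLIntegral_eq hπ' hA hD, ← hφbarμ,
    Measure.map_apply hφbar (hA.inter (hπ' hD))]
  congr 1
  ext x
  simp [hcomm]

theorem ae_ae_of_ae (hdis : IsDisintegration μ ν π μy) {p : X → Prop} (h : ∀ᵐ x ∂μ, p x) :
    ∀ᵐ y ∂ν, ∀ᵐ x ∂μy y, p x := by
  have hN : ∫⁻ y, μy y (toMeasurable μ {x | ¬p x}) ∂ν = 0 := by
    rw [← hdis.eq _ (measurableSet_toMeasurable _ _), measure_toMeasurable]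
    exact h
  filter_upwards [(lintegral_eq_zero_iff (hdis.meas _ (measurableSet_toMeasurable _ _))).1 hN]
    with y hy
  exact measure_mono_null (subset_toMeasurable _ _) hy

end IsDisintegration

def partitionName {G X : Type*} (T : G → X → X) {r : ℕ} (P : X → Fin r) (F : Finset G)
    (x : X) : F → Fin r :=
  fun f => P (T f x)

section HammingNames

variable {G X X' : Type*} {T : G → X → X} {T' : G → X' → X'} {r : ℕ} {P : X → Fin r}
  {P' : X' → Fin r} {F : Finset G} {ε : ℝ}

theorem measurable_partitionName [MeasurableSpace X] (hT : ∀ g, Measurable (T g))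
    (hP : Measurable P) : Measurable (partitionName T P F) :=
  measurable_pi_lambda _ fun f => hP.comp (hT f)

theorem hamDist_self (x : X) : hamDist T P F x x = 0 := by
  simp [hamDist]

theorem hamDist_eq_of_partitionName_eq {x z : X} {x' z' : X'}
    (hx : partitionName T P F x = partitionName T' P' F x')
    (hz : partitionName T P F z = partitionName T' P' F z') :
    hamDist T P F x z = hamDist T' P' F x' z' := by
  unfold hamDist
  congr 3
  refine Finset.filter_congr fun f hf => ?_
  have hxf : P (T f x) = P' (T' f x') := congrFun hx ⟨f, hf⟩
  have hzf : P (T f z) = P' (T' f z') := congrFun hz ⟨f, hf⟩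
  rw [hxf, hzf]

theorem diamLE_preimage_image_partitionName {E : Set X} (h : diamLE T P F E ε) :
    diamLE T P F (partitionName T P F ⁻¹' (partitionName T P F '' E)) ε := by
  rintro x ⟨a, ha, hax⟩ z ⟨b, hb, hbz⟩
  rw [← hamDist_eq_of_partitionName_eq hax hbz]
  exact h a ha b hb

theorem diamLE_preimage_singleton_partitionName (w : F → Fin r) (hε : 0 ≤ ε) :
    diamLE T P F (partitionName T P F ⁻¹' {w}) ε := by
  rintro x (hx : _ = w) z (hz : _ = w)
  rw [hamDist_eq_of_partitionName_eq (hx.trans hz.symm) rfl, hamDist_self]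
  exact hε

variable [MeasurableSpace X] {lam : Measure X}

theorem hamCov_le_of_cover {M : ℕ} (E : Fin M → Set X) (hE : ∀ i, diamLE T P F (E i) ε)
    (hlam : ENNReal.ofReal (1 - ε) ≤ lam (⋃ i, E i)) : hamCov T lam P F ε ≤ M :=
  Nat.sInf_le ⟨E, hE, hlam⟩

theorem exists_partitionName_cover [IsProbabilityMeasure lam] (hε : 0 ≤ ε) :
    ∃ E : Fin (Fintype.card (F → Fin r)) → Set X, (∀ i, diamLE T P F (E i) ε) ∧
      ENNReal.ofReal (1 - ε) ≤ lam (⋃ i, E i) := by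
  let e := Fintype.equivFin (F → Fin r)
  refine ⟨fun i => partitionName T P F ⁻¹' {e.symm i},
    fun i => diamLE_preimage_singleton_partitionName _ hε, ?_⟩
  have hcover : ⋃ i, partitionName T P F ⁻¹' {e.symm i} = univ :=
    eq_univ_of_forall fun x => mem_iUnion.2 ⟨e (partitionName T P F x), by simp⟩
  rw [hcover, measure_univ]
  exact ENNReal.ofReal_le_one.2 (by linarith)

theorem hamCov_le_card [IsProbabilityMeasure lam] (hε : 0 ≤ ε) :
    hamCov T lam P F ε ≤ Fintype.card (F → Fin r) :=
  let ⟨E, hE, hlam⟩ := exists_partitionName_cover hε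
  hamCov_le_of_cover E hE hlam

theorem exists_cover_card_hamCov [IsProbabilityMeasure lam] (hε : 0 ≤ ε) :
    ∃ E : Fin (hamCov T lam P F ε) → Set X, (∀ i, diamLE T P F (E i) ε) ∧
      ENNReal.ofReal (1 - ε) ≤ lam (⋃ i, E i) :=
  Nat.sInf_mem (s := {M | ∃ E : Fin M → Set X, (∀ i, diamLE T P F (E i) ε) ∧
    ENNReal.ofReal (1 - ε) ≤ lam (⋃ i, E i)}) ⟨_, exists_partitionName_cover hε⟩

theorem hamCovRel_eq_zero_of_one_le {Y : Type*} [MeasurableSpace Y] {μy : Y → Measure X}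
    {ν : Measure Y} (hε : 1 ≤ ε) : hamCovRel T μy ν P F ε = 0 :=
  Nat.eq_zero_of_le_zero <| Nat.sInf_le ⟨∅, .empty, by simp [hε], by simp⟩

theorem exists_hamCovRel_witness {Y : Type*} [MeasurableSpace Y] {μy : Y → Measure X}
    {ν : Measure Y} [IsProbabilityMeasure ν] (hμy : ∀ y, IsProbabilityMeasure (μy y))
    (hε : 0 ≤ ε) :
    ∃ S, MeasurableSet S ∧ ENNReal.ofReal (1 - ε) ≤ ν S ∧
      ∀ y ∈ S, hamCov T (μy y) P F ε ≤ hamCovRel T μy ν P F ε :=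
  Nat.sInf_mem (s := {M | ∃ S, MeasurableSet S ∧ ENNReal.ofReal (1 - ε) ≤ ν S ∧
    ∀ y ∈ S, hamCov T (μy y) P F ε ≤ M})
    ⟨_, univ, .univ, by simp [hε], fun y _ => hamCov_le_card hε⟩

def IsNameCover (T : G → X → X) (P : X → Fin r) (F : Finset G) (ε : ℝ) (M : ℕ)
    (C : Set (F → Fin r)) : Prop :=
  ∃ K ≤ M, ∃ c : Fin K → Set (F → Fin r),
    (∀ i, diamLE T P F (partitionName T P F ⁻¹' c i) ε) ∧ C = ⋃ i, c i

theorem exists_isNameCover_of_hamCov_le [IsProbabilityMeasure lam] {M : ℕ} (hε : 0 ≤ ε)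
    (h : hamCov T lam P F ε ≤ M) :
    ∃ C, IsNameCover T P F ε M C ∧
      ENNReal.ofReal (1 - ε) ≤ lam (partitionName T P F ⁻¹' C) := by
  obtain ⟨E, hE, hlamE⟩ := exists_cover_card_hamCov (T := T) (P := P) (F := F) (lam := lam) hε
  refine ⟨⋃ i, partitionName T P F '' E i,
    ⟨_, h, _, fun i => diamLE_preimage_image_partitionName (hE i), rfl⟩, hlamE.trans ?_⟩
  rw [preimage_iUnion]
  exact measure_mono (iUnion_mono fun i => subset_preimage_image _ _)

theorem hamCov_le_of_isNameCover {M : ℕ} {ε' : ℝ} {C : Set (F → Fin r)} {φbar : X → X'}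
    (hC : IsNameCover T' P' F ε' M C) (hε : ε' ≤ ε)
    (hname : ∀ᵐ x ∂lam, partitionName T P F x = partitionName T' P' F (φbar x))
    (hlam : ENNReal.ofReal (1 - ε) ≤ lam (φbar ⁻¹' (partitionName T' P' F ⁻¹' C))) :
    hamCov T lam P F ε ≤ M := by
  obtain ⟨K, hKM, c, hc, rfl⟩ := hC
  refine (hamCov_le_of_cover (fun i => φbar ⁻¹' (partitionName T' P' F ⁻¹' c i) ∩
    {x | partitionName T P F x = partitionName T' P' F (φbar x)})
    (fun i x hx z hz => ?_) ?_).trans hKM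
  · rw [hamDist_eq_of_partitionName_eq hx.2 hz.2]
    exact (hc i _ hx.1 _ hz.1).trans hε
  · rwa [← iUnion_inter, ← preimage_iUnion, ← preimage_iUnion, measure_inter_conull hname]

end HammingNames

section Transfer

variable {G X Y X' Y' : Type*} [MeasurableSpace X] [MeasurableSpace Y] [MeasurableSpace X']
  [MeasurableSpace Y'] [MeasurableSingletonClass Y] [MeasurableSingletonClass Y']
  {T : G → X → X} {T' : G → X' → X'} {μ : Measure X} {ν : Measure Y} {μ' : Measure X'}
  {ν' : Measure Y'} [IsProbabilityMeasure ν] [IsProbabilityMeasure ν'] {π : X → Y}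
  {π' : X' → Y'} {μy : Y → Measure X} {μy' : Y' → Measure X'} {φbar : X → X'} {φ : Y → Y'}
  {r : ℕ} {P : X → Fin r} {P' : X' → Fin r} {F : Finset G}

theorem ofReal_one_sub_le_measure_iUnion_isNameCover_add (hdis : IsDisintegration μ ν π μy)
    (hdis' : IsDisintegration μ' ν' π' μy') (hπ : Measurable π) (hπ' : Measurable π')
    (hφbar : Measurable φbar) (hφbarμ : μ.map φbar = μ') (hφ : Measurable φ)
    (hφν : ν.map φ = ν') (hcomm : ∀ x, π' (φbar x) = φ (π x)) (hT' : ∀ g, Measurable (T' g))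
    (hP' : Measurable P') {δ ε : ℝ} (hδ : 0 ≤ δ) (hε : 0 < ε) :
    ENNReal.ofReal (1 - δ) ≤
      ν (⋃ C : {C // IsNameCover T' P' F δ (hamCovRel T' μy' ν' P' F δ) C},
        {y | 1 - ENNReal.ofReal ε ≤ μy y (φbar ⁻¹' (partitionName T' P' F ⁻¹' C.1))}) +
      ENNReal.ofReal (δ / ε) := by
  have hA : ∀ C : Set (F → Fin r), MeasurableSet (partitionName T' P' F ⁻¹' C) := fun C =>
    measurable_partitionName hT' hP' (toFinite C).measurableSet
  obtain ⟨S', -, hS'ν, hS'⟩ :=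
    exists_hamCovRel_witness (T := T') (P := P') (F := F) (ν := ν') hdis'.prob hδ
  have hS'sub : S' ⊆ ⋃ C : {C // IsNameCover T' P' F δ (hamCovRel T' μy' ν' P' F δ) C},
      {y' | 1 - ENNReal.ofReal δ ≤ μy' y' (partitionName T' P' F ⁻¹' C.1)} := by
    intro y' hy'
    have := hdis'.prob y'
    obtain ⟨C, hC, hμC⟩ := exists_isNameCover_of_hamCov_le hδ (hS' y' hy')
    exact mem_iUnion.2 ⟨⟨C, hC⟩, by rwa [ENNReal.ofReal_sub _ hδ, ENNReal.ofReal_one] at hμC⟩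
  rw [ENNReal.ofReal_div_of_pos hε]
  exact hS'ν.trans ((measure_mono hS'sub).trans (measure_iUnion_setOf_le_add hφ hφν
    (fun C => hdis.meas _ (hφbar (hA C.1))) (fun C y => have := hdis.prob y; prob_le_one)
    (fun C => hdis'.meas _ (hA C.1))
    (fun C D hD => hdis.setLIntegral_preimage_eq hdis' hπ hπ' hφbar hφbarμ hφ hcomm (hA C.1) hD)
    (ENNReal.ofReal_pos.2 hε).ne' ENNReal.ofReal_ne_top))

theorem hamCovRel_le_of_ae_partitionName_eq (hdis : IsDisintegration μ ν π μy)
    (hdis' : IsDisintegration μ' ν' π' μy') (hπ : Measurable π) (hπ' : Measurable π')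
    (hφbar : Measurable φbar) (hφbarμ : μ.map φbar = μ') (hφ : Measurable φ)
    (hφν : ν.map φ = ν') (hcomm : ∀ x, π' (φbar x) = φ (π x)) (hT' : ∀ g, Measurable (T' g))
    (hP' : Measurable P')
    (hname : ∀ᵐ x ∂μ, partitionName T P F x = partitionName T' P' F (φbar x)) {ε : ℝ}
    (hε : 0 < ε) :
    hamCovRel T μy ν P F ε ≤ hamCovRel T' μy' ν' P' F (ε ^ 2 / 2) := by
  rcases le_or_gt 1 ε with hε1 | hε1
  · rw [hamCovRel_eq_zero_of_one_le hε1]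
    exact Nat.zero_le _
  set Q := ⋃ C : {C // IsNameCover T' P' F (ε ^ 2 / 2) (hamCovRel T' μy' ν' P' F (ε ^ 2 / 2)) C},
    {y | 1 - ENNReal.ofReal ε ≤ μy y (φbar ⁻¹' (partitionName T' P' F ⁻¹' C.1))}
  have hQ : MeasurableSet Q := .iUnion fun C => hdis.meas _ (hφbar
    (measurable_partitionName hT' hP' (toFinite C.1).measurableSet)) measurableSet_Ici
  set N := toMeasurable ν {y | ¬∀ᵐ x ∂μy y, partitionName T P F x = partitionName T' P' F (φbar x)}
  have hN : ν N = 0 := by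
    rw [measure_toMeasurable]
    exact hdis.ae_ae_of_ae hname
  refine Nat.sInf_le ⟨Q ∩ Nᶜ, hQ.inter (measurableSet_toMeasurable _ _).compl, ?_, ?_⟩
  · rw [measure_inter_conull ((compl_compl N).symm ▸ hN)]
    refine (ENNReal.add_le_add_iff_right ENNReal.ofReal_ne_top).1 (le_trans ?_
      (ofReal_one_sub_le_measure_iUnion_isNameCover_add hdis hdis' hπ hπ' hφbar hφbarμ hφ hφν
        hcomm hT' hP' (by positivity) hε))
    have hdiv : ε ^ 2 / 2 / ε = ε / 2 := by field_simp
    rw [hdiv, ← ENNReal.ofReal_add (by linarith) (by linarith)]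
    exact ENNReal.ofReal_le_ofReal (by nlinarith)
  · rintro y ⟨hyQ, hyN⟩
    obtain ⟨C, hC⟩ := mem_iUnion.1 hyQ
    refine hamCov_le_of_isNameCover C.2 (by nlinarith)
      (not_not.1 fun h => hyN (subset_toMeasurable _ _ h)) ?_
    rwa [ENNReal.ofReal_sub _ hε.le, ENNReal.ofReal_one]

end Transfer

theorem ae_partitionName_eq_comp {G X X' : Type*} [MeasurableSpace X] {T : G → X → X}
    {T' : G → X' → X'} {μ : Measure X} (hT : ∀ g, Measure.QuasiMeasurePreserving (T g) μ μ)
    {φbar : X → X'} (hequiv : ∀ g x, φbar (T g x) = T' g (φbar x)) {ρ : X' → X}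
    (hρ : ∀ᵐ x ∂μ, ρ (φbar x) = x) {r : ℕ} (P : X → Fin r) (F : Finset G) :
    ∀ᵐ x ∂μ, partitionName T P F x = partitionName T' (P ∘ ρ) F (φbar x) := by
  have hρT : ∀ᵐ x ∂μ, ∀ f : F, ρ (φbar (T f x)) = T f x := ae_all_iff.2 fun f => (hT f.1).ae hρ
  filter_upwards [hρT] with x hx
  funext f
  simp [partitionName, ← hequiv, hx f]

theorem ENNReal.ofReal_div_le_ofReal_div {a b : ℝ} (ha : 0 ≤ a) (hab : a ≤ b) (c : ℝ) :
    ENNReal.ofReal (a / c) ≤ ENNReal.ofReal (b / c) := by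
  rcases le_or_gt c 0 with hc | hc
  · rw [ENNReal.ofReal_of_nonpos (div_nonpos_of_nonneg_of_nonpos ha hc)]
    exact zero_le
  · gcongr

theorem slowEntropyPartRel_le_of_hamCovRel_le {G X Y X' Y' : Type*} [MeasurableSpace X]
    [MeasurableSpace Y] [MeasurableSpace X'] [MeasurableSpace Y'] {T : G → X → X}
    {T' : G → X' → X'} {μy : Y → Measure X} {ν : Measure Y} {μy' : Y' → Measure X'}
    {ν' : Measure Y'} {r r' : ℕ} {P : X → Fin r} {P' : X' → Fin r'} {U : ℕ → ℝ}
    {F : ℕ → Finset G}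
    (h : ∀ ε > 0, ∃ ε' > 0, ∀ n, hamCovRel T μy ν P (F n) ε ≤ hamCovRel T' μy' ν' P' (F n) ε') :
    slowEntropyPartRel T μy ν P U F ≤ slowEntropyPartRel T' μy' ν' P' U F := by
  refine iSup₂_le fun ε hε => ?_
  obtain ⟨ε', hε', hle⟩ := h ε hε
  refine le_iSup₂_of_le ε' hε' (limsup_le_limsup (Eventually.of_forall fun n => ?_))
  exact ENNReal.ofReal_div_le_ofReal_div (Nat.cast_nonneg _) (Nat.cast_le.2 (hle n)) _

theorem relative_slow_entropy_monotone_under_more_conditioning_general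
    {G X Y X' Y' : Type*} [Group G]
    [MeasurableSpace X] [MeasurableSpace Y] [MeasurableSpace X'] [MeasurableSpace Y']
    [StandardBorelSpace Y] [StandardBorelSpace Y']
    (T : G → X → X) (μ : Measure X) (S : G → Y → Y) (ν : Measure Y)
    (T' : G → X' → X') (μ' : Measure X') (S' : G → Y' → Y') (ν' : Measure Y')
    (hX : IsMPSystem T μ) (hY : IsMPSystem S ν) (hX' : IsMPSystem T' μ') (hY' : IsMPSystem S' ν')
    (π : X → Y) (π' : X' → Y')
    (hπ : IsFactorMap T μ S ν π) (hπ' : IsFactorMap T' μ' S' ν' π')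
    (φbar : X → X') (φ : Y → Y')
    (hφbar : IsIsomorphism T μ T' μ' φbar) (hφ : IsFactorMap S ν S' ν' φ)
    (hcomm : ∀ x, π' (φbar x) = φ (π x))
    (μy : Y → Measure X) (hdis : IsDisintegration μ ν π μy)
    (μy' : Y' → Measure X') (hdis' : IsDisintegration μ' ν' π' μy')
    (U : ℕ → ℝ) (F : ℕ → Finset G) :
    slowEntropyRel T μy ν U F ≤ slowEntropyRel T' μy' ν' U F := by
  have := hY.prob
  have := hY'.prob
  obtain ⟨hφbar, ρ, hρ, hρφbar, -⟩ := hφbar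
  refine iSup₂_le fun r P => iSup_le fun hP =>
    le_iSup₂_of_le r (P ∘ ρ) (le_iSup_of_le (hP.comp hρ.meas) ?_)
  refine slowEntropyPartRel_le_of_hamCovRel_le fun ε hε => ⟨ε ^ 2 / 2, by positivity, fun n => ?_⟩
  exact hamCovRel_le_of_ae_partitionName_eq hdis hdis' hπ.meas hπ'.meas hφbar.meas hφbar.map
    hφ.meas hφ.map hcomm hX'.meas (hP.comp hρ.meas)
    (ae_partitionName_eq_comp (fun g => (hX.mp g).quasiMeasurePreserving) hφbar.equiv hρφbar P
      (F n)) hε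

/-- Theorem `MonotoneUnderMoreConditioning`.
If `π' : X' → Y'` is a downward extension of `π : X → Y` (i.e. there is an isomorphism
`φ̄ : X → X'` and a factor map `φ : Y → Y'` with `π' ∘ φ̄ = φ ∘ π`), then
`h_slow^{U,(F_n)}(X | π) ≤ h_slow^{U,(F_n)}(X' | π')` for every rate function `U` and
Følner sequence `(F_n)`. -/
theorem relative_slow_entropy_monotone_under_more_conditioning
    {G X Y X' Y' : Type*} [Group G] [Countable G]
    [MeasurableSpace X] [MeasurableSpace Y] [MeasurableSpace X'] [MeasurableSpace Y']
    [StandardBorelSpace X] [StandardBorelSpace Y] [StandardBorelSpace X'] [StandardBorelSpace Y']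
    (T : G → X → X) (μ : Measure X) (S : G → Y → Y) (ν : Measure Y)
    (T' : G → X' → X') (μ' : Measure X') (S' : G → Y' → Y') (ν' : Measure Y')
    (hX : IsMPSystem T μ) (hY : IsMPSystem S ν) (hX' : IsMPSystem T' μ') (hY' : IsMPSystem S' ν')
    (π : X → Y) (π' : X' → Y')
    (hπ : IsFactorMap T μ S ν π) (hπ' : IsFactorMap T' μ' S' ν' π')
    (φbar : X → X') (φ : Y → Y')
    (hφbar : IsIsomorphism T μ T' μ' φbar) (hφ : IsFactorMap S ν S' ν' φ)
    (hcomm : ∀ x, π' (φbar x) = φ (π x))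
    (μy : Y → Measure X) (hdis : IsDisintegration μ ν π μy)
    (μy' : Y' → Measure X') (hdis' : IsDisintegration μ' ν' π' μy')
    (U : ℕ → ℝ) (hU : IsRateFunction U) (F : ℕ → Finset G) (hF : IsFolner F) :
    slowEntropyRel T μy ν U F ≤ slowEntropyRel T' μy' ν' U F :=
  relative_slow_entropy_monotone_under_more_conditioning_general T μ S ν T' μ' S' ν' hX hY hX' hY' π
    π' hπ hπ' φbar φ hφbar hφ hcomm μy hdis μy' hdis' U F
end

section
/- Fix a Følner sequence (F_n) for G and a factor map π : X → Y. Let P be a finite measurable partition of X and let Q' be a finite measurable partition of X that is measurable with respect to P^{F_k} ∨ π^{-1}(B_Y) for some k ∈ ℕ, where P^{F_k} = ⋁_{f ∈ F_k} T^{-f}P. Then for any ε > 0 there exists ε' > 0 (one may take ε' = ε/(2|F_k|)) such that cov(μ, Q', F_n, ε | π) ≤ cov(μ, P, F_n, ε' | π) for all sufficiently large n. -/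
open MeasureTheory Filter Set Topology
open scoped ENNReal Classical symmDiff

/-! Since `Q'` is determined by the `(P, F_k)`-name of a point together with its fibre, two
points of one fibre whose `Q'`-names differ at `g ∈ F_n` have `P`-names differing at `f g` for some
`f ∈ F_k`. Once `F_n` is `ε'`-invariant under `F_k`, this gives
`d_{Q',F_n} ≤ |F_k| (d_{P,F_n} + ε') ≤ 2 |F_k| ε' = ε` on each fibre, so intersecting a
`(P, F_n, ε')`-cover of `μ_y` with the fibre of `y` yields a `(Q', F_n, ε)`-cover of the same size. -/

open Finset

theorem eq_of_measurable_generateFrom {α β : Type*} [MeasurableSpace β]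
    [MeasurableSingletonClass β] {C : Set (Set α)} {f : α → β}
    (hf : Measurable[MeasurableSpace.generateFrom C] f) {x x' : α}
    (h : ∀ A ∈ C, x ∈ A ↔ x' ∈ A) : f x = f x' := by
  have hsep : ∀ A, MeasurableSet[MeasurableSpace.generateFrom C] A → (x ∈ A ↔ x' ∈ A) := by
    intro A hA
    induction hA with
    | basic A hA => exact h A hA
    | empty => exact Iff.rfl
    | compl A _ ih => exact not_congr ih
    | iUnion A _ ih =>
      simp only [mem_iUnion]
      exact exists_congr ih
  exact ((hsep _ (hf (measurableSet_singleton (f x)))).mp rfl).symm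

theorem apply_eq_of_measurable_names_join_factor {G X Y : Type*} [MeasurableSpace Y]
    {T : G → X → X} {π : X → Y} {K : Finset G} {r s : ℕ} {P : X → Fin r} {Q : X → Fin s}
    (hQ : Measurable[MeasurableSpace.generateFrom
      ({A : Set X | ∃ f ∈ K, ∃ i : Fin r, A = T f ⁻¹' (P ⁻¹' {i})} ∪
       {A : Set X | ∃ B : Set Y, MeasurableSet B ∧ A = π ⁻¹' B})] Q)
    {x x' : X} (hπ : π x = π x') (hP : ∀ f ∈ K, P (T f x) = P (T f x')) : Q x = Q x' := by
  refine eq_of_measurable_generateFrom hQ ?_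
  rintro A (⟨f, hf, i, rfl⟩ | ⟨B, -, rfl⟩)
  · simp only [Set.mem_preimage, mem_singleton_iff, hP f hf]
  · simp only [Set.mem_preimage, hπ]

theorem Finset.card_filter_mul_add_card_inter_le {G : Type*} [Mul G] [IsLeftCancelMul G]
    [DecidableEq G] (p : G → Prop) [DecidablePred p] (A : Finset G) (f : G) :
    #(A.filter fun u => p (f * u)) + #((A.image fun u => f * u) ∩ A) ≤ #(A.filter p) + #A := by
  set B := A.image fun u => f * u
  have hB : #B = #A := card_image_of_injective _ (mul_right_injective f)
  have hshift : #(A.filter fun u => p (f * u)) = #(B.filter p) := by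
    rw [filter_image, card_image_of_injective _ (mul_right_injective f)]
  have hsplit : B.filter p ⊆ A.filter p ∪ (B \ A) := by
    intro u hu
    rw [mem_filter] at hu
    by_cases huA : u ∈ A
    · exact mem_union_left _ (mem_filter.mpr ⟨huA, hu.2⟩)
    · exact mem_union_right _ (mem_sdiff.mpr ⟨hu.1, huA⟩)
  have hsplit_card := (card_le_card hsplit).trans (card_union_le _ _)
  have hB_parts := card_sdiff_add_card_inter B A
  omega

theorem Finset.card_filter_le_sum_of_forall_exists {G : Type*} [Mul G] (A K : Finset G)
    (p q : G → Prop) [DecidablePred p] [DecidablePred q]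
    (h : ∀ g ∈ A, q g → ∃ f ∈ K, p (f * g)) :
    #(A.filter q) ≤ ∑ f ∈ K, #(A.filter fun u => p (f * u)) := by
  refine (card_le_card ?_).trans card_biUnion_le
  intro g hg
  obtain ⟨hgA, hgq⟩ := mem_filter.mp hg
  obtain ⟨f, hfK, hf⟩ := h g hgA hgq
  exact mem_biUnion.mpr ⟨f, hfK, mem_filter.mpr ⟨hgA, hf⟩⟩

theorem IsFolner.eventually_card_le {G : Type*} [Group G] {F : ℕ → Finset G} (hF : IsFolner F)
    (K : Finset G) {δ : ℝ} (hδ : 0 < δ) :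
    ∀ᶠ n in atTop, ∀ f ∈ K,
      (#(F n) : ℝ) ≤ #((F n).image (fun h => f * h) ∩ F n) + δ * #(F n) := by
  rw [eventually_all_finset]
  intro f _
  filter_upwards [(hF.2 f).eventually (eventually_ge_nhds (sub_lt_self 1 hδ))] with n hn
  have hFn : (0 : ℝ) < #(F n) := by exact_mod_cast card_pos.mpr (hF.1 n)
  rw [le_div_iff₀ hFn] at hn
  linarith

/-- A point of `Fₙ` where the `Q`-names differ is, up to a shift by some `f ∈ K`, a point where
the `P`-names differ; for Følner `Fₙ` a shift moves only a `δ`-fraction of `Fₙ` outside `Fₙ`. -/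
theorem hamDist_le_of_measurable_names_join_factor {G X Y : Type*} [Group G] [MeasurableSpace Y]
    {T : G → X → X} {S : G → Y → Y} {π : X → Y}
    (hmul : ∀ g g' x, T (g * g') x = T g (T g' x)) (hequiv : ∀ g x, π (T g x) = S g (π x))
    {K A : Finset G} {r s : ℕ} {P : X → Fin r} {Q : X → Fin s}
    (hQ : Measurable[MeasurableSpace.generateFrom
      ({A : Set X | ∃ f ∈ K, ∃ i : Fin r, A = T f ⁻¹' (P ⁻¹' {i})} ∪
       {A : Set X | ∃ B : Set Y, MeasurableSet B ∧ A = π ⁻¹' B})] Q)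
    (hA : A.Nonempty) {δ : ℝ}
    (hfol : ∀ f ∈ K, (#A : ℝ) ≤ #(A.image (fun h => f * h) ∩ A) + δ * #A)
    {x x' : X} (hπ : π x = π x') :
    hamDist T Q A x x' ≤ #K * (hamDist T P A x x' + δ) := by
  set p : G → Prop := fun u => P (T u x) ≠ P (T u x')
  have hQP : ∀ g ∈ A, Q (T g x) ≠ Q (T g x') → ∃ f ∈ K, p (f * g) := by
    intro g _ hg
    by_contra! hnone
    refine hg (apply_eq_of_measurable_names_join_factor hQ (by rw [hequiv, hequiv, hπ]) ?_)
    intro f hf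
    simpa only [p, hmul, not_not] using hnone f hf
  have hshift : ∀ f ∈ K, (#(A.filter fun u => p (f * u)) : ℝ) ≤ #(A.filter p) + δ * #A := by
    intro f hf
    have hcard : (#(A.filter fun u => p (f * u)) : ℝ) + #((A.image fun u => f * u) ∩ A)
        ≤ #(A.filter p) + #A := by exact_mod_cast card_filter_mul_add_card_inter_le p A f
    linarith [hfol f hf]
  have hcount : (#(A.filter fun g => Q (T g x) ≠ Q (T g x')) : ℝ)
      ≤ #K * (#(A.filter p) + δ * #A) :=
    calc (#(A.filter fun g => Q (T g x) ≠ Q (T g x')) : ℝ)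
        ≤ ∑ f ∈ K, (#(A.filter fun u => p (f * u)) : ℝ) := by
          exact_mod_cast card_filter_le_sum_of_forall_exists A K p _ hQP
      _ ≤ ∑ _f ∈ K, ((#(A.filter p) : ℝ) + δ * #A) := sum_le_sum hshift
      _ = #K * (#(A.filter p) + δ * #A) := by rw [sum_const, nsmul_eq_mul]
  have hAcard : (0 : ℝ) < #A := by exact_mod_cast card_pos.mpr hA
  unfold hamDist
  rw [div_le_iff₀ hAcard]
  calc _ ≤ _ := hcount
    _ = #K * (#(A.filter p) / #A + δ) * #A := by field_simp

section Covering

variable {G X : Type*} [MeasurableSpace X] {T : G → X → X} {r : ℕ} {P : X → Fin r}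
  {F : Finset G} {ε : ℝ}

theorem hamCov_le {lam : Measure X} {M : ℕ} (E : Fin M → Set X)
    (hE : ∀ i, diamLE T P F (E i) ε) (hcov : ENNReal.ofReal (1 - ε) ≤ lam (⋃ i, E i)) :
    hamCov T lam P F ε ≤ M :=
  Nat.sInf_le ⟨E, hE, hcov⟩

/-- The cells of points with a common `(P, F)`-name have diameter `0` and cover `X`. -/
theorem exists_hamCov_cover_card_names (lam : Measure X) [IsProbabilityMeasure lam]
    (hε : 0 ≤ ε) :
    ∃ E : Fin (Fintype.card (F → Fin r)) → Set X,
      (∀ i, diamLE T P F (E i) ε) ∧ ENNReal.ofReal (1 - ε) ≤ lam (⋃ i, E i) := by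
  set e := Fintype.equivFin (F → Fin r)
  refine ⟨fun j => {z | ∀ f : F, P (T f z) = e.symm j f}, ?_, ?_⟩
  · intro j z hz z' hz'
    have hnone : (F.filter fun f => P (T f z) ≠ P (T f z')) = ∅ :=
      filter_eq_empty_iff.mpr fun f hf => not_not.mpr ((hz ⟨f, hf⟩).trans (hz' ⟨f, hf⟩).symm)
    simpa [hamDist, hnone] using hε
  · have hunion : (⋃ j, {z | ∀ f : F, P (T f z) = e.symm j f}) = univ :=
      eq_univ_of_forall fun z => mem_iUnion.mpr ⟨e fun f => P (T f z), fun f => by simp⟩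
    rw [hunion, measure_univ]
    exact ENNReal.ofReal_le_one.mpr (by linarith)

theorem exists_hamCov_cover (lam : Measure X) [IsProbabilityMeasure lam] (hε : 0 ≤ ε) :
    ∃ E : Fin (hamCov T lam P F ε) → Set X,
      (∀ i, diamLE T P F (E i) ε) ∧ ENNReal.ofReal (1 - ε) ≤ lam (⋃ i, E i) :=
  Nat.sInf_mem (s := {M : ℕ | ∃ E : Fin M → Set X,
    (∀ i, diamLE T P F (E i) ε) ∧ ENNReal.ofReal (1 - ε) ≤ lam (⋃ i, E i)})
    ⟨_, exists_hamCov_cover_card_names lam hε⟩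

theorem hamCov_le_hamCov_of_ae_mem {lam : Measure X} [IsProbabilityMeasure lam] {s : ℕ}
    {Q : X → Fin s} {A : Set X} (hA : ∀ᵐ x ∂lam, x ∈ A) {ε' : ℝ} (hε' : 0 ≤ ε')
    (hε'ε : ε' ≤ ε)
    (hd : ∀ x ∈ A, ∀ x' ∈ A, hamDist T P F x x' ≤ ε' → hamDist T Q F x x' ≤ ε) :
    hamCov T lam Q F ε ≤ hamCov T lam P F ε' := by
  obtain ⟨E, hEdiam, hEcov⟩ := exists_hamCov_cover (T := T) (P := P) (F := F) lam hε'
  refine hamCov_le (fun i => E i ∩ A) ?_ ?_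
  · intro i x hx x' hx'
    exact hd x hx.2 x' hx'.2 (hEdiam i x hx.1 x' hx'.1)
  · rw [← iUnion_inter, measure_inter_conull (ae_iff.mp hA)]
    exact (ENNReal.ofReal_le_ofReal (by linarith)).trans hEcov

variable {Y : Type*} [MeasurableSpace Y] {μy : Y → Measure X} {ν : Measure Y}

theorem hamCovRel_le {M : ℕ} {B : Set Y} (hB : MeasurableSet B)
    (hν : ENNReal.ofReal (1 - ε) ≤ ν B) (h : ∀ y ∈ B, hamCov T (μy y) P F ε ≤ M) :
    hamCovRel T μy ν P F ε ≤ M :=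
  Nat.sInf_le ⟨B, hB, hν, h⟩

theorem exists_hamCovRel_set [IsProbabilityMeasure ν] (hμy : ∀ y, IsProbabilityMeasure (μy y))
    (hε : 0 ≤ ε) :
    ∃ B : Set Y, MeasurableSet B ∧ ENNReal.ofReal (1 - ε) ≤ ν B ∧
      ∀ y ∈ B, hamCov T (μy y) P F ε ≤ hamCovRel T μy ν P F ε := by
  refine Nat.sInf_mem (s := {M : ℕ | ∃ B : Set Y, MeasurableSet B ∧
    ENNReal.ofReal (1 - ε) ≤ ν B ∧ ∀ y ∈ B, hamCov T (μy y) P F ε ≤ M}) ⟨Fintype.card (F → Fin r), univ, MeasurableSet.univ, ?_, fun y _ => ?_⟩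
  · rw [measure_univ]
    exact ENNReal.ofReal_le_one.mpr (by linarith)
  · obtain ⟨E, hE, hcov⟩ := exists_hamCov_cover_card_names (T := T) (P := P) (F := F) (μy y) hε
    exact hamCov_le E hE hcov

theorem hamCovRel_le_hamCovRel_of_ae [IsProbabilityMeasure ν]
    (hμy : ∀ y, IsProbabilityMeasure (μy y)) {s : ℕ} {Q : X → Fin s} {ε' : ℝ} (hε' : 0 ≤ ε')
    (hε'ε : ε' ≤ ε) (h : ∀ᵐ y ∂ν, hamCov T (μy y) Q F ε ≤ hamCov T (μy y) P F ε') :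
    hamCovRel T μy ν Q F ε ≤ hamCovRel T μy ν P F ε' := by
  obtain ⟨B, hB, hνB, hBcov⟩ := exists_hamCovRel_set (T := T) (P := P) (F := F) (ν := ν) hμy hε'
  obtain ⟨C, hCae, hC, hCcov⟩ := h.exists_measurable_mem
  refine hamCovRel_le (hB.inter hC) ?_ fun y hy => (hCcov y hy.2).trans (hBcov y hy.1)
  rw [measure_inter_conull (mem_ae_iff.mp hCae)]
  exact (ENNReal.ofReal_le_ofReal (by linarith)).trans hνB

end Covering

theorem relative_cov_approximate_by_refining_partition_general
    {G X Y : Type*} [Group G]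
    [MeasurableSpace X] [MeasurableSpace Y] [StandardBorelSpace Y]
    (T : G → X → X) (μ : Measure X) (S : G → Y → Y) (ν : Measure Y)
    (hX : IsMPSystem T μ) (hY : IsMPSystem S ν)
    (π : X → Y) (hπ : IsFactorMap T μ S ν π)
    (μy : Y → Measure X) (hdis : IsDisintegration μ ν π μy)
    (F : ℕ → Finset G) (hF : IsFolner F)
    (r : ℕ) (P : X → Fin r)
    (k : ℕ) (s : ℕ) (Q' : X → Fin s)
    (hQ' : @Measurable X (Fin s)
      (MeasurableSpace.generateFrom
        ({A : Set X | ∃ f ∈ F k, ∃ i : Fin r, A = T f ⁻¹' (P ⁻¹' {i})} ∪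
         {A : Set X | ∃ B : Set Y, MeasurableSet B ∧ A = π ⁻¹' B})) _ Q')
    (ε : ℝ) (hε : 0 < ε) :
    ∃ ε' > 0,
      ∀ᶠ n in atTop, hamCovRel T μy ν Q' (F n) ε ≤ hamCovRel T μy ν P (F n) ε' := by
  have := hY.prob
  have hK : (1 : ℝ) ≤ #(F k) := by exact_mod_cast card_pos.mpr (hF.1 k)
  set ε' := ε / (2 * #(F k))
  have hε' : 0 < ε' := by positivity
  have hε'ε : ε' ≤ ε := div_le_self hε.le (by linarith)
  refine ⟨ε', hε', ?_⟩
  filter_upwards [hF.eventually_card_le (F k) hε'] with n hn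
  refine hamCovRel_le_hamCovRel_of_ae hdis.prob hε'.le hε'ε ?_
  filter_upwards [hdis.supp] with y hy
  have := hdis.prob y
  have hfibre : MeasurableSet (π ⁻¹' {y}) := hπ.meas (measurableSet_singleton y)
  refine hamCov_le_hamCov_of_ae_mem (A := π ⁻¹' {y})
    (ae_iff.mpr ((prob_compl_eq_zero_iff hfibre).mpr hy)) hε'.le hε'ε ?_
  intro x hx x' hx' hd
  calc hamDist T Q' (F n) x x'
      ≤ #(F k) * (hamDist T P (F n) x x' + ε') :=
        hamDist_le_of_measurable_names_join_factor hX.mul hπ.equiv hQ' (hF.1 n) hn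
          (hx.trans hx'.symm)
    _ ≤ #(F k) * (ε' + ε') := by gcongr
    _ = ε := by simp only [ε']; field_simp; ring

/-- Lemma `ApproximateByRefiningPartition`.
Let `P` be a finite measurable partition of `X`, and let `Q'` be a finite partition that is
measurable with respect to `P^{F_k} ∨ π⁻¹(B_Y)` for some `k`.  Then for any `ε > 0` there
is an `ε' > 0` such that `cov(μ, Q', F_n, ε | π) ≤ cov(μ, P, F_n, ε' | π)` for all
sufficiently large `n`. -/
theorem relative_cov_approximate_by_refining_partition
    {G X Y : Type*} [Group G] [Countable G]
    [MeasurableSpace X] [MeasurableSpace Y] [StandardBorelSpace X] [StandardBorelSpace Y]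
    (T : G → X → X) (μ : Measure X) (S : G → Y → Y) (ν : Measure Y)
    (hX : IsMPSystem T μ) (hY : IsMPSystem S ν)
    (π : X → Y) (hπ : IsFactorMap T μ S ν π)
    (μy : Y → Measure X) (hdis : IsDisintegration μ ν π μy)
    (F : ℕ → Finset G) (hF : IsFolner F)
    (r : ℕ) (P : X → Fin r) (hP : Measurable P)
    (k : ℕ) (s : ℕ) (Q' : X → Fin s)
    (hQ' : @Measurable X (Fin s)
      (MeasurableSpace.generateFrom
        ({A : Set X | ∃ f ∈ F k, ∃ i : Fin r, A = T f ⁻¹' (P ⁻¹' {i})} ∪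
         {A : Set X | ∃ B : Set Y, MeasurableSet B ∧ A = π ⁻¹' B})) _ Q')
    (ε : ℝ) (hε : 0 < ε) :
    ∃ ε' > 0,
      ∀ᶠ n in atTop, hamCovRel T μy ν Q' (F n) ε ≤ hamCovRel T μy ν P (F n) ε' :=
  relative_cov_approximate_by_refining_partition_general T μ S ν hX hY π hπ μy hdis F hF r P k s Q'
    hQ' ε hε
end
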